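/- arXiv:1506.08388 — 4 statements merged into one kernel-verified Lean document; each statement's English description precedes it below -/
import Mathlib

section
/- Let H = (X ∪ Y ∪ Z, F) be a tripartite 3-uniform hypergraph with |X| = |Y| = |Z| = n and F ⊆ X × Y × Z, |F| = m, and let G_H be the 4-layer graph constructed from H by the reduction. Then G_H admits an IV-matching if and only if H admits a perfect matching. -/
/-!
The reduction from 3-Dimensional Matching to the IV-matching problem
(Folwarczný–Knop).  The tripartite 3-uniform hypergraph `H` has pairwise
disjoint vertex classes `X`, `Y`, `Z` (modeled as separate types) and
hyperedge set `F ⊆ X × Y × Z`.  The reduction graph `G_H` has vertex type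
`RVtx F` with four layers `L1 = X ∪ Y`, `L2 = {x_e, y_e : e ∈ F}`,
`L3 = {z_e : e ∈ F}`, `L4 = Z`, and edge set `GHedges F`.
-/

set_option maxHeartbeats 1000000
set_option synthInstance.maxSize 512

open Finset

variable {X Y Z : Type*} [DecidableEq X] [DecidableEq Y] [DecidableEq Z]
  [Fintype X] [Fintype Y] [Fintype Z]

/-- Vertex type of the reduction graph `G_H`. -/
abbrev RVtx (F : Finset (X × Y × Z)) : Type _ :=
  (X ⊕ Y) ⊕ (({e // e ∈ F} × Bool) ⊕ ({e // e ∈ F} ⊕ Z))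

variable (F : Finset (X × Y × Z))

instance instDecEqRVtx : DecidableEq (RVtx F) :=
  fun a b => inferInstanceAs (Decidable (a = b))

instance instFintypeRVtx : Fintype (RVtx F) :=
  inferInstanceAs (Fintype ((X ⊕ Y) ⊕ (({e // e ∈ F} × Bool) ⊕ ({e // e ∈ F} ⊕ Z))))

/-- The vertex `x` of a hyperedge `e = ⟨x, y, z⟩`, viewed in layer `V₁`. -/
def xV (e : {e // e ∈ F}) : RVtx F := Sum.inl (Sum.inl e.1.1)

/-- The vertex `y` of a hyperedge `e = ⟨x, y, z⟩`, viewed in layer `V₁`. -/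
def yV (e : {e // e ∈ F}) : RVtx F := Sum.inl (Sum.inr e.1.2.1)

/-- The vertex `z` of a hyperedge `e = ⟨x, y, z⟩`, viewed in layer `V₄`. -/
def zV (e : {e // e ∈ F}) : RVtx F := Sum.inr (Sum.inr (Sum.inr e.1.2.2))

/-- The new vertex `x_e` of layer `V₂` associated with a hyperedge `e`. -/
def xE (e : {e // e ∈ F}) : RVtx F := Sum.inr (Sum.inl (e, false))

/-- The new vertex `y_e` of layer `V₂` associated with a hyperedge `e`. -/
def yE (e : {e // e ∈ F}) : RVtx F := Sum.inr (Sum.inl (e, true))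

/-- The new vertex `z_e` of layer `V₃` associated with a hyperedge `e`. -/
def zE (e : {e // e ∈ F}) : RVtx F := Sum.inr (Sum.inr (Sum.inl e))

/-- Layer `V₁ = X ∪ Y` of `G_H`. -/
def L1 : Finset (RVtx F) := Finset.univ.image fun a : X ⊕ Y => (Sum.inl a : RVtx F)

/-- Layer `V₂ = {x_e, y_e : e ∈ F}` of `G_H`. -/
def L2 : Finset (RVtx F) :=
  Finset.univ.image fun p : {e // e ∈ F} × Bool => (Sum.inr (Sum.inl p) : RVtx F)

/-- Layer `V₃ = {z_e : e ∈ F}` of `G_H`. -/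
def L3 : Finset (RVtx F) :=
  Finset.univ.image fun e : {e // e ∈ F} => (Sum.inr (Sum.inr (Sum.inl e)) : RVtx F)

/-- Layer `V₄ = Z` of `G_H`. -/
def L4 : Finset (RVtx F) :=
  Finset.univ.image fun z : Z => (Sum.inr (Sum.inr (Sum.inr z)) : RVtx F)

/-- The edges of the reduction graph `G_H`: for each hyperedge `e = ⟨x, y, z⟩`
the edges `{x, x_e}, {x, y_e}, {y, x_e}, {y, y_e}, {x_e, z_e}, {y_e, z_e}, {z_e, z}`. -/
def GHedges : Finset (Sym2 (RVtx F)) :=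
  Finset.univ.biUnion fun e : {e // e ∈ F} =>
    { s(xV F e, xE F e), s(xV F e, yE F e), s(yV F e, xE F e), s(yV F e, yE F e),
      s(xE F e, zE F e), s(yE F e, zE F e), s(zE F e, zV F e) }

/-- `M` is an IV-matching of the 4-layer graph with layers `V1, V2, V3, V4` and
edge set `E`: it is a set of edges of the graph such that every vertex of `V1` is
incident in `M` to exactly one vertex of `V2`; every vertex of `V2` is incident in
`M` to exactly one vertex of `V1 ∪ V3`; every vertex of `V3` is incident in `M`
either to exactly two vertices of `V2` and no vertex of `V4`, or to exactly one
vertex of `V4` and no vertex of `V2`; and every vertex of `V4` is incident in `M`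
to exactly one vertex of `V3`. -/
def IVMatching {V : Type*} [DecidableEq V] (V1 V2 V3 V4 : Finset V)
    (E M : Finset (Sym2 V)) : Prop :=
  M ⊆ E ∧
  (∀ v ∈ V1, (V2.filter fun w => s(v, w) ∈ M).card = 1) ∧
  (∀ v ∈ V2, ((V1 ∪ V3).filter fun w => s(v, w) ∈ M).card = 1) ∧
  (∀ v ∈ V3,
    ((V2.filter fun w => s(v, w) ∈ M).card = 2 ∧ (V4.filter fun w => s(v, w) ∈ M).card = 0) ∨
    ((V4.filter fun w => s(v, w) ∈ M).card = 1 ∧ (V2.filter fun w => s(v, w) ∈ M).card = 0)) ∧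
  (∀ v ∈ V4, (V3.filter fun w => s(v, w) ∈ M).card = 1)

/-- `N` is a perfect matching of the tripartite hypergraph `H = (X ∪ Y ∪ Z, F)`:
a set of pairwise disjoint hyperedges of `F` covering every vertex. -/
def HPerfectMatching (N : Finset (X × Y × Z)) : Prop :=
  N ⊆ F ∧
  (∀ e ∈ N, ∀ f ∈ N, e ≠ f → e.1 ≠ f.1 ∧ e.2.1 ≠ f.2.1 ∧ e.2.2 ≠ f.2.2) ∧
  (∀ x : X, ∃ e ∈ N, e.1 = x) ∧
  (∀ y : Y, ∃ e ∈ N, e.2.1 = y) ∧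
  (∀ z : Z, ∃ e ∈ N, e.2.2 = z)

/-!
In an IV-matching of `G_H`, the vertex `z_e` is matched either to `z` or to both `x_e` and `y_e`.
In the second case `x_e` and `y_e` are used up, so a vertex of `V₁` can only be matched to `x_e`
or `y_e` for a hyperedge `e` whose `z_e` is matched to `z`; and when `z_e` is matched to `z`,
the two vertices `x_e, y_e` have to be matched to `x` and `y`, one each. Hence these hyperedges
cover every vertex of `H`, and they are pairwise disjoint because every vertex of `V₁ ∪ V₄` is
matched only once. Conversely, a perfect matching `N` yields the IV-matching
`{x x_e, y y_e, z_e z : e ∈ N} ∪ {x_e z_e, y_e z_e : e ∉ N}`.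
-/

lemma ivMatching_iff {V : Type*} [DecidableEq V] {V1 V2 V3 V4 : Finset V}
    {E M : Finset (Sym2 V)} :
    IVMatching V1 V2 V3 V4 E M ↔ M ⊆ E ∧
      (∀ v ∈ V1, ∃! w, w ∈ V2 ∧ s(v, w) ∈ M) ∧
      (∀ v ∈ V2, ∃! w, w ∈ V1 ∪ V3 ∧ s(v, w) ∈ M) ∧
      (∀ v ∈ V3, (#{w ∈ V2 | s(v, w) ∈ M} = 2 ∧ ∀ w ∈ V4, s(v, w) ∉ M) ∨
        ((∃! w, w ∈ V4 ∧ s(v, w) ∈ M) ∧ ∀ w ∈ V2, s(v, w) ∉ M)) ∧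
      (∀ v ∈ V4, ∃! w, w ∈ V3 ∧ s(v, w) ∈ M) := by
  simp only [IVMatching, card_eq_one_iff_existsUnique, mem_filter, card_filter_eq_zero_iff]

variable {F}

section GHedges

omit [Fintype X] [Fintype Y] [Fintype Z]

variable {e f : {e // e ∈ F}} {b : Bool}

lemma mem_GHedges_iff {s : Sym2 (RVtx F)} :
    s ∈ GHedges F ↔ ∃ e : {e // e ∈ F},
      s = s(xV F e, xE F e) ∨ s = s(xV F e, yE F e) ∨ s = s(yV F e, xE F e) ∨
      s = s(yV F e, yE F e) ∨ s = s(xE F e, zE F e) ∨ s = s(yE F e, zE F e) ∨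
      s = s(zE F e, zV F e) := by
  simp [GHedges]

@[simp] lemma x_V2_mem_GHedges_iff {x : X} :
    s((Sum.inl (Sum.inl x) : RVtx F), Sum.inr (Sum.inl (e, b))) ∈ GHedges F ↔ e.1.1 = x := by
  cases b <;> simpa [mem_GHedges_iff, xV, yV, zV, xE, yE, zE] using eq_comm

@[simp] lemma y_V2_mem_GHedges_iff {y : Y} :
    s((Sum.inl (Sum.inr y) : RVtx F), Sum.inr (Sum.inl (e, b))) ∈ GHedges F ↔ e.1.2.1 = y := by
  cases b <;> simpa [mem_GHedges_iff, xV, yV, zV, xE, yE, zE] using eq_comm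

@[simp] lemma V2_zE_mem_GHedges_iff :
    s((Sum.inr (Sum.inl (e, b)) : RVtx F), zE F f) ∈ GHedges F ↔ e = f := by
  cases b <;> simpa [mem_GHedges_iff, xV, yV, zV, xE, yE, zE] using eq_comm

@[simp] lemma zE_z_mem_GHedges_iff {z : Z} :
    s(zE F e, (Sum.inr (Sum.inr (Sum.inr z)) : RVtx F)) ∈ GHedges F ↔ e.1.2.2 = z := by
  simpa [mem_GHedges_iff, xV, yV, zV, xE, yE, zE] using eq_comm

end GHedges

section IVMatchingToPerfectMatching

variable {M : Finset (Sym2 (RVtx F))} {e : {e // e ∈ F}} {b : Bool}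

lemma IVMatching.V2_zE_mem_iff (hM : IVMatching (L1 F) (L2 F) (L3 F) (L4 F) (GHedges F) M) :
    s(Sum.inr (Sum.inl (e, b)), zE F e) ∈ M ↔ s(zE F e, zV F e) ∉ M := by
  obtain ⟨hME, -, -, h3, -⟩ := ivMatching_iff.mp hM
  rcases h3 (zE F e) (by simp [L3, zE]) with ⟨htwo, hnoZ⟩ | ⟨⟨w, ⟨hw, hwM⟩, -⟩, hnoV2⟩
  · have hsub : {w ∈ L2 F | s(zE F e, w) ∈ M} ⊆ {xE F e, yE F e} := by
      intro w hw
      obtain ⟨hw, hwM⟩ := mem_filter.mp hw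
      obtain ⟨⟨f, c⟩, rfl⟩ : ∃ p, Sum.inr (Sum.inl p) = w := by simpa [L2] using hw
      have hfe : f = e := by
        have := hME hwM
        rwa [Sym2.eq_swap, V2_zE_mem_GHedges_iff] at this
      cases c <;> simp [hfe, xE, yE]
    have hpair := eq_of_subset_of_card_le hsub (card_le_two.trans htwo.ge)
    have hb : (Sum.inr (Sum.inl (e, b)) : RVtx F) ∈ {w ∈ L2 F | s(zE F e, w) ∈ M} := by
      cases b <;> simp [hpair, xE, yE]
    refine iff_of_true (by rw [Sym2.eq_swap]; exact (mem_filter.mp hb).2) ?_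
    exact hnoZ _ (by simp [L4, zV])
  · obtain ⟨z, rfl⟩ : ∃ z, Sum.inr (Sum.inr (Sum.inr z)) = w := by simpa [L4] using hw
    have hz : e.1.2.2 = z := zE_z_mem_GHedges_iff.mp (hME hwM)
    refine iff_of_false ?_ (not_not.mpr (by rwa [zV, hz]))
    rw [Sym2.eq_swap]
    exact hnoV2 (Sum.inr (Sum.inl (e, b))) (by simp [L2])

lemma IVMatching.zE_z_mem_of_V1_V2_mem
    (hM : IVMatching (L1 F) (L2 F) (L3 F) (L4 F) (GHedges F) M) {v : RVtx F} (hv : v ∈ L1 F)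
    (hvM : s(v, Sum.inr (Sum.inl (e, b))) ∈ M) : s(zE F e, zV F e) ∈ M := by
  obtain ⟨-, -, h2, -, -⟩ := ivMatching_iff.mp hM
  by_contra hz
  have hvz : v = zE F e := (h2 _ (by simp [L2])).unique
    ⟨mem_union_left _ hv, by rwa [Sym2.eq_swap]⟩
    ⟨mem_union_right _ (by simp [L3, zE]), hM.V2_zE_mem_iff.mpr hz⟩
  simp [hvz, L1, zE] at hv

lemma IVMatching.eq_of_V1_V2_mem
    (hM : IVMatching (L1 F) (L2 F) (L3 F) (L4 F) (GHedges F) M) {v : RVtx F} (hv : v ∈ L1 F)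
    {f : {e // e ∈ F}} {c : Bool} (he : s(v, Sum.inr (Sum.inl (e, b))) ∈ M)
    (hf : s(v, Sum.inr (Sum.inl (f, c))) ∈ M) : e = f := by
  obtain ⟨-, h1, -, -, -⟩ := ivMatching_iff.mp hM
  have := (h1 v hv).unique ⟨by simp [L2], he⟩ ⟨by simp [L2], hf⟩
  simp_all

lemma IVMatching.eq_of_zE_z_mem
    (hM : IVMatching (L1 F) (L2 F) (L3 F) (L4 F) (GHedges F) M) {v : RVtx F} (hv : v ∈ L4 F)
    {f : {e // e ∈ F}} (he : s(zE F e, v) ∈ M) (hf : s(zE F f, v) ∈ M) : e = f := by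
  obtain ⟨-, -, -, -, h4⟩ := ivMatching_iff.mp hM
  rw [Sym2.eq_swap] at he hf
  have := (h4 v hv).unique ⟨by simp [L3, zE], he⟩ ⟨by simp [L3, zE], hf⟩
  simpa [zE] using this

lemma IVMatching.xV_or_yV_V2_mem
    (hM : IVMatching (L1 F) (L2 F) (L3 F) (L4 F) (GHedges F) M) (hz : s(zE F e, zV F e) ∈ M) :
    s(xV F e, Sum.inr (Sum.inl (e, b))) ∈ M ∨ s(yV F e, Sum.inr (Sum.inl (e, b))) ∈ M := by
  obtain ⟨hME, -, h2, -, -⟩ := ivMatching_iff.mp hM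
  obtain ⟨w, ⟨hw, hwM⟩, -⟩ := h2 (Sum.inr (Sum.inl (e, b))) (by simp [L2])
  have hwE := hME hwM
  rcases mem_union.mp hw with hw | hw
  · obtain ⟨a | a, rfl⟩ : ∃ a, Sum.inl a = w := by simpa [L1] using hw
    all_goals rw [Sym2.eq_swap] at hwM hwE
    · rw [x_V2_mem_GHedges_iff] at hwE
      exact .inl (by rwa [xV, hwE])
    · rw [y_V2_mem_GHedges_iff] at hwE
      exact .inr (by rwa [yV, hwE])
  · obtain ⟨f, rfl⟩ : ∃ f, Sum.inr (Sum.inr (Sum.inl f)) = w := by simpa [L3] using hw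
    obtain rfl := V2_zE_mem_GHedges_iff.mp hwE
    exact absurd hz (hM.V2_zE_mem_iff.mp hwM)

lemma IVMatching.exists_xV_yV_V2_mem
    (hM : IVMatching (L1 F) (L2 F) (L3 F) (L4 F) (GHedges F) M) (hz : s(zE F e, zV F e) ∈ M) :
    (∃ b, s(xV F e, Sum.inr (Sum.inl (e, b))) ∈ M) ∧
      ∃ b, s(yV F e, Sum.inr (Sum.inl (e, b))) ∈ M := by
  obtain ⟨-, h1, -, -, -⟩ := ivMatching_iff.mp hM
  have hne : ∀ v ∈ L1 F, s(v, xE F e) ∈ M → s(v, yE F e) ∉ M := fun v hv hx hy => by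
    have := (h1 v hv).unique ⟨by simp [L2, xE], hx⟩ ⟨by simp [L2, yE], hy⟩
    simp [xE, yE] at this
  rcases hM.xV_or_yV_V2_mem (b := false) hz with hx | hx <;>
    rcases hM.xV_or_yV_V2_mem (b := true) hz with hy | hy
  · exact absurd hy (hne _ (by simp [L1, xV]) hx)
  · exact ⟨⟨_, hx⟩, ⟨_, hy⟩⟩
  · exact ⟨⟨_, hy⟩, ⟨_, hx⟩⟩
  · exact absurd hy (hne _ (by simp [L1, yV]) hx)

variable (F M) in
def zMatched : Finset (X × Y × Z) :=
  (F.attach.filter fun e => s(zE F e, zV F e) ∈ M).map (Function.Embedding.subtype _)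

omit [Fintype X] [Fintype Y] [Fintype Z] in
lemma mem_zMatched {a : X × Y × Z} :
    a ∈ zMatched F M ↔ ∃ e : {e // e ∈ F}, s(zE F e, zV F e) ∈ M ∧ e.1 = a := by
  simp [zMatched]

lemma IVMatching.zMatched_disjoint
    (hM : IVMatching (L1 F) (L2 F) (L3 F) (L4 F) (GHedges F) M) {f : {e // e ∈ F}}
    (he : s(zE F e, zV F e) ∈ M) (hf : s(zE F f, zV F f) ∈ M) (hef : e ≠ f) :
    e.1.1 ≠ f.1.1 ∧ e.1.2.1 ≠ f.1.2.1 ∧ e.1.2.2 ≠ f.1.2.2 := by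
  obtain ⟨⟨bx, hex⟩, ⟨by', hey⟩⟩ := hM.exists_xV_yV_V2_mem he
  obtain ⟨⟨cx, hfx⟩, ⟨cy, hfy⟩⟩ := hM.exists_xV_yV_V2_mem hf
  refine ⟨fun hx => hef ?_, fun hy => hef ?_, fun hz => hef ?_⟩
  · rw [xV, hx] at hex
    exact hM.eq_of_V1_V2_mem (by simp [L1]) hex hfx
  · rw [yV, hy] at hey
    exact hM.eq_of_V1_V2_mem (by simp [L1]) hey hfy
  · rw [zV, hz] at he
    exact hM.eq_of_zE_z_mem (by simp [L4]) he hf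

theorem IVMatching.hPerfectMatching_zMatched
    (hM : IVMatching (L1 F) (L2 F) (L3 F) (L4 F) (GHedges F) M) :
    HPerfectMatching F (zMatched F M) := by
  obtain ⟨hME, h1, -, -, h4⟩ := ivMatching_iff.mp hM
  refine ⟨?_, ?_, ?_, ?_, ?_⟩
  · intro a ha
    obtain ⟨e, -, rfl⟩ := mem_zMatched.mp ha
    exact e.2
  · intro a ha c hc hne
    obtain ⟨e, he, rfl⟩ := mem_zMatched.mp ha
    obtain ⟨f, hf, rfl⟩ := mem_zMatched.mp hc
    exact hM.zMatched_disjoint he hf fun h => hne (congrArg Subtype.val h)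
  · intro x
    obtain ⟨w, ⟨hw, hwM⟩, -⟩ := h1 (Sum.inl (Sum.inl x)) (by simp [L1])
    obtain ⟨⟨e, b⟩, rfl⟩ : ∃ p, Sum.inr (Sum.inl p) = w := by simpa [L2] using hw
    exact ⟨e.1, mem_zMatched.mpr ⟨e, hM.zE_z_mem_of_V1_V2_mem (by simp [L1]) hwM, rfl⟩,
      x_V2_mem_GHedges_iff.mp (hME hwM)⟩
  · intro y
    obtain ⟨w, ⟨hw, hwM⟩, -⟩ := h1 (Sum.inl (Sum.inr y)) (by simp [L1])
    obtain ⟨⟨e, b⟩, rfl⟩ : ∃ p, Sum.inr (Sum.inl p) = w := by simpa [L2] using hw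
    exact ⟨e.1, mem_zMatched.mpr ⟨e, hM.zE_z_mem_of_V1_V2_mem (by simp [L1]) hwM, rfl⟩,
      y_V2_mem_GHedges_iff.mp (hME hwM)⟩
  · intro z
    obtain ⟨w, ⟨hw, hwM⟩, -⟩ := h4 (Sum.inr (Sum.inr (Sum.inr z))) (by simp [L4])
    obtain ⟨e, rfl⟩ : ∃ e, Sum.inr (Sum.inr (Sum.inl e)) = w := by simpa [L3] using hw
    rw [Sym2.eq_swap] at hwM
    have hz : e.1.2.2 = z := zE_z_mem_GHedges_iff.mp (hME hwM)
    exact ⟨e.1, mem_zMatched.mpr ⟨e, by rwa [zV, hz], rfl⟩, hz⟩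

end IVMatchingToPerfectMatching

section PerfectMatchingToIVMatching

variable {N : Finset (X × Y × Z)}

section HPerfectMatching

omit [DecidableEq X] [DecidableEq Y] [DecidableEq Z] [Fintype X] [Fintype Y] [Fintype Z]

variable {a c : X × Y × Z}

lemma HPerfectMatching.eq_of_fst_eq (hN : HPerfectMatching F N) (ha : a ∈ N) (hc : c ∈ N)
    (h : a.1 = c.1) : a = c :=
  by_contra fun hne => (hN.2.1 a ha c hc hne).1 h

lemma HPerfectMatching.eq_of_snd_fst_eq (hN : HPerfectMatching F N) (ha : a ∈ N) (hc : c ∈ N)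
    (h : a.2.1 = c.2.1) : a = c :=
  by_contra fun hne => (hN.2.1 a ha c hc hne).2.1 h

lemma HPerfectMatching.eq_of_snd_snd_eq (hN : HPerfectMatching F N) (ha : a ∈ N) (hc : c ∈ N)
    (h : a.2.2 = c.2.2) : a = c :=
  by_contra fun hne => (hN.2.1 a ha c hc hne).2.2 h

end HPerfectMatching

variable (F N) in
def ivMatchingOf : Finset (Sym2 (RVtx F)) :=
  F.attach.biUnion fun e =>
    if e.1 ∈ N then {s(xV F e, xE F e), s(yV F e, yE F e), s(zE F e, zV F e)}
    else {s(xE F e, zE F e), s(yE F e, zE F e)}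

variable {e f : {e // e ∈ F}} {b : Bool}

section Membership

omit [Fintype X] [Fintype Y] [Fintype Z]

lemma mem_ivMatchingOf_iff {s : Sym2 (RVtx F)} :
    s ∈ ivMatchingOf F N ↔ ∃ e : {e // e ∈ F},
      e.1 ∈ N ∧ (s = s(xV F e, xE F e) ∨ s = s(yV F e, yE F e) ∨ s = s(zE F e, zV F e)) ∨
      e.1 ∉ N ∧ (s = s(xE F e, zE F e) ∨ s = s(yE F e, zE F e)) := by
  simp only [ivMatchingOf, mem_biUnion, mem_attach, true_and]
  refine exists_congr fun e => ?_
  by_cases he : e.1 ∈ N <;> simp [he]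

lemma ivMatchingOf_subset_GHedges : ivMatchingOf F N ⊆ GHedges F := by
  intro s hs
  obtain ⟨e, ⟨-, hs⟩ | ⟨-, hs⟩⟩ := mem_ivMatchingOf_iff.mp hs <;>
    exact mem_GHedges_iff.mpr ⟨e, by tauto⟩

@[simp] lemma x_V2_mem_ivMatchingOf_iff {x : X} :
    s((Sum.inl (Sum.inl x) : RVtx F), Sum.inr (Sum.inl (e, b))) ∈ ivMatchingOf F N ↔
      e.1 ∈ N ∧ e.1.1 = x ∧ b = false := by
  cases b <;> simp [mem_ivMatchingOf_iff, xV, yV, zV, xE, yE, zE, eq_comm (a := x)]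

@[simp] lemma y_V2_mem_ivMatchingOf_iff {y : Y} :
    s((Sum.inl (Sum.inr y) : RVtx F), Sum.inr (Sum.inl (e, b))) ∈ ivMatchingOf F N ↔
      e.1 ∈ N ∧ e.1.2.1 = y ∧ b = true := by
  cases b <;> simp [mem_ivMatchingOf_iff, xV, yV, zV, xE, yE, zE, eq_comm (a := y)]

@[simp] lemma V2_zE_mem_ivMatchingOf_iff :
    s((Sum.inr (Sum.inl (e, b)) : RVtx F), zE F f) ∈ ivMatchingOf F N ↔ e.1 ∉ N ∧ e = f := by
  cases b <;> simp [mem_ivMatchingOf_iff, xV, yV, zV, xE, yE, zE, eq_comm (a := f)] <;>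
    rintro rfl <;> rfl

@[simp] lemma zE_z_mem_ivMatchingOf_iff {z : Z} :
    s(zE F e, (Sum.inr (Sum.inr (Sum.inr z)) : RVtx F)) ∈ ivMatchingOf F N ↔
      e.1 ∈ N ∧ e.1.2.2 = z := by
  obtain ⟨⟨x, y, z'⟩, he⟩ := e
  simp [mem_ivMatchingOf_iff, xV, yV, zV, xE, yE, zE, eq_comm (a := z), he]

end Membership

omit [Fintype Z] in
lemma HPerfectMatching.existsUnique_V1_partner (hN : HPerfectMatching F N) {v : RVtx F}
    (hv : v ∈ L1 F) : ∃! w, w ∈ L2 F ∧ s(v, w) ∈ ivMatchingOf F N := by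
  obtain ⟨hNF, -, hcovX, hcovY, -⟩ := id hN
  obtain ⟨x | y, rfl⟩ : ∃ a, Sum.inl a = v := by simpa [L1] using hv
  · obtain ⟨a, ha, rfl⟩ := hcovX x
    refine ⟨xE F ⟨a, hNF ha⟩, ⟨by simp [L2, xE], by simp [xE, ha]⟩, ?_⟩
    rintro w ⟨hw, hwM⟩
    obtain ⟨⟨f, c⟩, rfl⟩ : ∃ p, Sum.inr (Sum.inl p) = w := by simpa [L2] using hw
    obtain ⟨hf, hfx, rfl⟩ := x_V2_mem_ivMatchingOf_iff.mp hwM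
    simp [xE, Subtype.ext_iff, hN.eq_of_fst_eq hf ha hfx]
  · obtain ⟨a, ha, rfl⟩ := hcovY y
    refine ⟨yE F ⟨a, hNF ha⟩, ⟨by simp [L2, yE], by simp [yE, ha]⟩, ?_⟩
    rintro w ⟨hw, hwM⟩
    obtain ⟨⟨f, c⟩, rfl⟩ : ∃ p, Sum.inr (Sum.inl p) = w := by simpa [L2] using hw
    obtain ⟨hf, hfy, rfl⟩ := y_V2_mem_ivMatchingOf_iff.mp hwM
    simp [yE, Subtype.ext_iff, hN.eq_of_snd_fst_eq hf ha hfy]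

omit [Fintype Z] in
lemma V2_mem_ivMatchingOf_iff {w : RVtx F} (hw : w ∈ L1 F ∪ L3 F) :
    s(Sum.inr (Sum.inl (e, b)), w) ∈ ivMatchingOf F N ↔
      w = if e.1 ∈ N then cond b (yV F e) (xV F e) else zE F e := by
  rcases mem_union.mp hw with hw | hw
  · obtain ⟨x | y, rfl⟩ : ∃ a, Sum.inl a = w := by simpa [L1] using hw
    all_goals
      rw [Sym2.eq_swap]
      by_cases he : e.1 ∈ N <;> cases b <;> simp [he, xV, yV, zE, eq_comm]
  · obtain ⟨f, rfl⟩ : ∃ f, zE F f = w := by simpa [L3, zE] using hw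
    rw [V2_zE_mem_ivMatchingOf_iff]
    by_cases he : e.1 ∈ N <;> cases b <;> simp [he, xV, yV, zE, eq_comm]

omit [Fintype Z] in
lemma existsUnique_V2_partner_ivMatchingOf {v : RVtx F} (hv : v ∈ L2 F) :
    ∃! w, w ∈ L1 F ∪ L3 F ∧ s(v, w) ∈ ivMatchingOf F N := by
  obtain ⟨⟨e, b⟩, rfl⟩ : ∃ p, Sum.inr (Sum.inl p) = v := by simpa [L2] using hv
  have hmem : (if e.1 ∈ N then cond b (yV F e) (xV F e) else zE F e) ∈ L1 F ∪ L3 F := by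
    split_ifs <;> [cases b; skip] <;> simp [L1, L3, xV, yV, zE]
  exact ⟨_, ⟨hmem, (V2_mem_ivMatchingOf_iff hmem).mpr rfl⟩,
    fun w hw => (V2_mem_ivMatchingOf_iff hw.1).mp hw.2⟩

omit [Fintype X] [Fintype Y] [Fintype Z] in
lemma filter_zE_ivMatchingOf_of_notMem (he : e.1 ∉ N) :
    {w ∈ L2 F | s(zE F e, w) ∈ ivMatchingOf F N} = {xE F e, yE F e} := by
  ext w
  simp only [mem_filter, mem_insert, mem_singleton]
  constructor
  · rintro ⟨hw, hwM⟩
    obtain ⟨⟨f, c⟩, rfl⟩ : ∃ p, Sum.inr (Sum.inl p) = w := by simpa [L2] using hw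
    rw [Sym2.eq_swap, V2_zE_mem_ivMatchingOf_iff] at hwM
    cases c <;> simp [xE, yE, hwM.2]
  · rintro (rfl | rfl) <;> rw [Sym2.eq_swap] <;> simp [L2, xE, yE, he]

omit [Fintype X] [Fintype Y] in
lemma zE_cases_ivMatchingOf :
    (#{w ∈ L2 F | s(zE F e, w) ∈ ivMatchingOf F N} = 2 ∧
        ∀ w ∈ L4 F, s(zE F e, w) ∉ ivMatchingOf F N) ∨
      ((∃! w, w ∈ L4 F ∧ s(zE F e, w) ∈ ivMatchingOf F N) ∧
        ∀ w ∈ L2 F, s(zE F e, w) ∉ ivMatchingOf F N) := by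
  by_cases he : e.1 ∈ N
  · refine .inr ⟨⟨zV F e, ⟨by simp [L4, zV], by simp [zV, he]⟩, ?_⟩, ?_⟩
    · rintro w ⟨hw, hwM⟩
      obtain ⟨z, rfl⟩ : ∃ z, Sum.inr (Sum.inr (Sum.inr z)) = w := by simpa [L4] using hw
      simp [zV, (zE_z_mem_ivMatchingOf_iff.mp hwM).2]
    · rintro w hw hwM
      obtain ⟨⟨f, c⟩, rfl⟩ : ∃ p, Sum.inr (Sum.inl p) = w := by simpa [L2] using hw
      rw [Sym2.eq_swap, V2_zE_mem_ivMatchingOf_iff] at hwM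
      exact hwM.1 (hwM.2 ▸ he)
  · refine .inl ⟨?_, ?_⟩
    · rw [filter_zE_ivMatchingOf_of_notMem he, card_pair (by simp [xE, yE])]
    · rintro w hw hwM
      obtain ⟨z, rfl⟩ : ∃ z, Sum.inr (Sum.inr (Sum.inr z)) = w := by simpa [L4] using hw
      exact he (zE_z_mem_ivMatchingOf_iff.mp hwM).1

omit [Fintype X] [Fintype Y] in
lemma HPerfectMatching.existsUnique_V4_partner (hN : HPerfectMatching F N) {v : RVtx F}
    (hv : v ∈ L4 F) : ∃! w, w ∈ L3 F ∧ s(v, w) ∈ ivMatchingOf F N := by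
  obtain ⟨hNF, -, -, -, hcovZ⟩ := id hN
  obtain ⟨z, rfl⟩ : ∃ z, Sum.inr (Sum.inr (Sum.inr z)) = v := by simpa [L4] using hv
  obtain ⟨a, ha, rfl⟩ := hcovZ z
  refine ⟨zE F ⟨a, hNF ha⟩, ⟨by simp [L3, zE], by rw [Sym2.eq_swap]; simp [ha]⟩, ?_⟩
  rintro w ⟨hw, hwM⟩
  obtain ⟨f, rfl⟩ : ∃ f, Sum.inr (Sum.inr (Sum.inl f)) = w := by simpa [L3] using hw
  rw [Sym2.eq_swap] at hwM
  obtain ⟨hf, hfz⟩ := zE_z_mem_ivMatchingOf_iff.mp hwM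
  simp [zE, Subtype.ext_iff, hN.eq_of_snd_snd_eq hf ha hfz]

theorem HPerfectMatching.ivMatching_ivMatchingOf (hN : HPerfectMatching F N) :
    IVMatching (L1 F) (L2 F) (L3 F) (L4 F) (GHedges F) (ivMatchingOf F N) := by
  refine ivMatching_iff.mpr ⟨ivMatchingOf_subset_GHedges, fun v => hN.existsUnique_V1_partner,
    fun v => existsUnique_V2_partner_ivMatchingOf, fun v hv => ?_,
    fun v => hN.existsUnique_V4_partner⟩
  obtain ⟨e, rfl⟩ : ∃ e, zE F e = v := by simpa [L3, zE] using hv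
  exact zE_cases_ivMatchingOf

end PerfectMatchingToIVMatching

theorem iv_matching_iff_perfect_matching_general {X Y Z : Type*} [DecidableEq X] [DecidableEq Y] [DecidableEq Z]
    [Fintype X] [Fintype Y] [Fintype Z]
    (F : Finset (X × Y × Z)) :
    (∃ M : Finset (Sym2 (RVtx F)), IVMatching (L1 F) (L2 F) (L3 F) (L4 F) (GHedges F) M) ↔
    (∃ N : Finset (X × Y × Z), HPerfectMatching F N) :=
  ⟨fun ⟨_, hM⟩ => ⟨_, hM.hPerfectMatching_zMatched⟩,
    fun ⟨_, hN⟩ => ⟨_, hN.ivMatching_ivMatchingOf⟩⟩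

theorem iv_matching_iff_perfect_matching {X Y Z : Type*} [DecidableEq X] [DecidableEq Y] [DecidableEq Z]
    [Fintype X] [Fintype Y] [Fintype Z] (n m : ℕ)
    (hX : Fintype.card X = n) (hY : Fintype.card Y = n) (hZ : Fintype.card Z = n)
    (F : Finset (X × Y × Z)) (hF : F.card = m) :
    (∃ M : Finset (Sym2 (RVtx F)), IVMatching (L1 F) (L2 F) (L3 F) (L4 F) (GHedges F) M) ↔
    (∃ N : Finset (X × Y × Z), HPerfectMatching F N) :=
  iv_matching_iff_perfect_matching_general F
end

section
/- Let H = (X ∪ Y ∪ Z, F) be a tripartite 3-uniform hypergraph with |X| = |Y| = |Z| = n and F ⊆ X × Y × Z, and let G_H be the 4-layer graph constructed from H by the reduction. If M is an IV-matching of G_H, then the set N = {e ∈ F : each of x_e, y_e, z_e is incident in M to a vertex of V₁ ∪ V₄} is a perfect matching of H. -/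
/-!
The reduction from 3-Dimensional Matching to the IV-matching problem
(Folwarczný–Knop).  The tripartite 3-uniform hypergraph `H` has pairwise
disjoint vertex classes `X`, `Y`, `Z` (modeled as separate types) and
hyperedge set `F ⊆ X × Y × Z`.  The reduction graph `G_H` has vertex type
`RVtx F` with four layers `L1 = X ∪ Y`, `L2 = {x_e, y_e : e ∈ F}`,
`L3 = {z_e : e ∈ F}`, `L4 = Z`, and edge set `GHedges F`.
-/

set_option maxHeartbeats 1000000
set_option synthInstance.maxSize 512

open Finset

variable {X Y Z : Type*} [DecidableEq X] [DecidableEq Y] [DecidableEq Z]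
  [Fintype X] [Fintype Y] [Fintype Z]

variable (F : Finset (X × Y × Z))

set_option linter.unusedSectionVars false
set_option linter.unusedVariables false

section Helpers
variable {α : Type*} [DecidableEq α]

lemma exists_of_filter_card_one {s : Finset α} {p : α → Prop} [DecidablePred p]
    (h : (s.filter p).card = 1) : ∃ a ∈ s, p a := by
  obtain ⟨c, hc⟩ := Finset.card_eq_one.mp h
  have hm : c ∈ s.filter p := hc ▸ Finset.mem_singleton_self c
  exact ⟨c, (Finset.mem_filter.mp hm).1, (Finset.mem_filter.mp hm).2⟩

lemma uniq_of_filter_card_one {s : Finset α} {p : α → Prop} [DecidablePred p]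
    (h : (s.filter p).card = 1) {a b : α} (ha : a ∈ s) (pa : p a)
    (hb : b ∈ s) (pb : p b) : a = b := by
  obtain ⟨c, hc⟩ := Finset.card_eq_one.mp h
  have h1 : a ∈ s.filter p := Finset.mem_filter.mpr ⟨ha, pa⟩
  have h2 : b ∈ s.filter p := Finset.mem_filter.mpr ⟨hb, pb⟩
  rw [hc, Finset.mem_singleton] at h1 h2
  rw [h1, h2]

lemma not_of_filter_card_zero {s : Finset α} {p : α → Prop} [DecidablePred p]
    (h : (s.filter p).card = 0) {a : α} (ha : a ∈ s) : ¬ p a := by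
  intro pa
  have hm : a ∈ s.filter p := Finset.mem_filter.mpr ⟨ha, pa⟩
  rw [Finset.card_eq_zero.mp h] at hm
  exact absurd hm (Finset.notMem_empty a)

end Helpers

set_option linter.unusedSectionVars false

section NbrLemmas
variable {F : Finset (X × Y × Z)}

lemma nbr_xE (e : {e // e ∈ F}) (b : Bool) (w : RVtx F)
    (h : s(Sum.inr (Sum.inl (e, b)), w) ∈ GHedges F) :
    w = xV F e ∨ w = yV F e ∨ w = zE F e := by
  simp only [GHedges, Finset.mem_biUnion, Finset.mem_insert, Finset.mem_singleton,
    Finset.mem_univ, true_and, xV, yV, zV, xE, yE, zE, Sym2.eq, Sym2.rel_iff',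
    Prod.mk.injEq, Prod.swap_prod_mk] at h
  obtain ⟨f, h⟩ := h
  simp_all [xV, yV, zE]
  rcases h with (⟨⟨rfl, -⟩, rfl⟩|⟨⟨rfl, -⟩, rfl⟩|⟨⟨rfl, -⟩, rfl⟩|⟨⟨rfl, -⟩, rfl⟩|⟨⟨rfl, -⟩, rfl⟩|⟨⟨rfl, -⟩, rfl⟩) <;> simp

lemma nbr_zE (e : {e // e ∈ F}) (w : RVtx F)
    (h : s(Sum.inr (Sum.inr (Sum.inl e)), w) ∈ GHedges F) :
    w = xE F e ∨ w = yE F e ∨ w = zV F e := by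
  simp only [GHedges, Finset.mem_biUnion, Finset.mem_insert, Finset.mem_singleton,
    Finset.mem_univ, true_and, xV, yV, zV, xE, yE, zE, Sym2.eq, Sym2.rel_iff',
    Prod.mk.injEq, Prod.swap_prod_mk] at h
  obtain ⟨f, h⟩ := h
  simp_all [xE, yE, zV]
  rcases h with (⟨rfl, rfl⟩|⟨rfl, rfl⟩|⟨rfl, rfl⟩) <;> simp

lemma nbr_x (x : X) (w : RVtx F)
    (h : s(Sum.inl (Sum.inl x), w) ∈ GHedges F) :
    ∃ e : {e // e ∈ F}, e.1.1 = x ∧ (w = xE F e ∨ w = yE F e) := by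
  simp only [GHedges, Finset.mem_biUnion, Finset.mem_insert, Finset.mem_singleton,
    Finset.mem_univ, true_and, xV, yV, zV, xE, yE, zE, Sym2.eq, Sym2.rel_iff',
    Prod.mk.injEq, Prod.swap_prod_mk] at h
  obtain ⟨f, h⟩ := h
  refine ⟨f, ?_⟩
  simp_all [xE, yE]
  tauto

lemma nbr_y (y : Y) (w : RVtx F)
    (h : s(Sum.inl (Sum.inr y), w) ∈ GHedges F) :
    ∃ e : {e // e ∈ F}, e.1.2.1 = y ∧ (w = xE F e ∨ w = yE F e) := by
  simp only [GHedges, Finset.mem_biUnion, Finset.mem_insert, Finset.mem_singleton,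
    Finset.mem_univ, true_and, xV, yV, zV, xE, yE, zE, Sym2.eq, Sym2.rel_iff',
    Prod.mk.injEq, Prod.swap_prod_mk] at h
  obtain ⟨f, h⟩ := h
  refine ⟨f, ?_⟩
  simp_all [xE, yE]
  tauto

lemma nbr_z (z : Z) (w : RVtx F)
    (h : s(Sum.inr (Sum.inr (Sum.inr z)), w) ∈ GHedges F) :
    ∃ e : {e // e ∈ F}, e.1.2.2 = z ∧ w = zE F e := by
  simp only [GHedges, Finset.mem_biUnion, Finset.mem_insert, Finset.mem_singleton,
    Finset.mem_univ, true_and, xV, yV, zV, xE, yE, zE, Sym2.eq, Sym2.rel_iff',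
    Prod.mk.injEq, Prod.swap_prod_mk] at h
  obtain ⟨f, h⟩ := h
  refine ⟨f, ?_⟩
  simp_all [zE]

lemma xV_mem_L1 (e : {e // e ∈ F}) : xV F e ∈ L1 F := by simp [L1, xV]
lemma yV_mem_L1 (e : {e // e ∈ F}) : yV F e ∈ L1 F := by simp [L1, yV]
lemma zV_mem_L4 (e : {e // e ∈ F}) : zV F e ∈ L4 F := by simp [L4, zV]
lemma inl_mem_L1 (a : X ⊕ Y) : (Sum.inl a : RVtx F) ∈ L1 F := by simp [L1]
lemma pair_mem_L2 (p : {e // e ∈ F} × Bool) : (Sum.inr (Sum.inl p) : RVtx F) ∈ L2 F := by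
  simp [L2]
lemma zE_mem_L3 (e : {e // e ∈ F}) : zE F e ∈ L3 F := by simp [L3, zE]
lemma z_mem_L4 (z : Z) : (Sum.inr (Sum.inr (Sum.inr z)) : RVtx F) ∈ L4 F := by simp [L4]
lemma xE_not_L14 (e : {e // e ∈ F}) : xE F e ∉ L1 F ∪ L4 F := by simp [L1, L4, xE]
lemma yE_not_L14 (e : {e // e ∈ F}) : yE F e ∉ L1 F ∪ L4 F := by simp [L1, L4, yE]
lemma zE_not_L14 (e : {e // e ∈ F}) : zE F e ∉ L1 F ∪ L4 F := by simp [L1, L4, zE]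
lemma zV_not_L2 (e : {e // e ∈ F}) : zV F e ∉ L2 F := by simp [L2, zV]
lemma xE_ne_yE (e : {e // e ∈ F}) : xE F e ≠ yE F e := by simp [xE, yE]
lemma xV_ne_zE (e f : {e // e ∈ F}) : xV F e ≠ zE F f := by simp [xV, zE]
lemma yV_ne_zE (e f : {e // e ∈ F}) : yV F e ≠ zE F f := by simp [yV, zE]

end NbrLemmas

theorem iv_matching_gives_perfect_matching {X Y Z : Type*} [DecidableEq X] [DecidableEq Y] [DecidableEq Z]
    [Fintype X] [Fintype Y] [Fintype Z] (n : ℕ)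
    (hX : Fintype.card X = n) (hY : Fintype.card Y = n) (hZ : Fintype.card Z = n)
    (F : Finset (X × Y × Z))
    (M : Finset (Sym2 (RVtx F)))
    (hM : IVMatching (L1 F) (L2 F) (L3 F) (L4 F) (GHedges F) M) :
    HPerfectMatching F
      ((F.attach.filter fun e =>
          (∃ w ∈ L1 F ∪ L4 F, s(xE F e, w) ∈ M) ∧
          (∃ w ∈ L1 F ∪ L4 F, s(yE F e, w) ∈ M) ∧
          (∃ w ∈ L1 F ∪ L4 F, s(zE F e, w) ∈ M)).image Subtype.val) := by
  classical
  obtain ⟨hsub, h1, h2, h3, h4⟩ := hM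
  -- z_e matched into L1 ∪ L4 forces the edge {z_e, z}
  have keyZ : ∀ e : {e // e ∈ F}, (∃ w ∈ L1 F ∪ L4 F, s(zE F e, w) ∈ M) →
      s(zE F e, zV F e) ∈ M := by
    rintro e ⟨w, hw, hm⟩
    rcases nbr_zE e w (hsub hm) with rfl | rfl | rfl
    · exact absurd hw (xE_not_L14 e)
    · exact absurd hw (yE_not_L14 e)
    · exact hm
  -- which z_e branch of the V3 condition holds
  have keyOpt2 : ∀ e : {e // e ∈ F}, s(zE F e, zV F e) ∈ M →
      ((L2 F).filter fun w => s(zE F e, w) ∈ M).card = 0 := by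
    intro e hm
    rcases h3 _ (zE_mem_L3 e) with ⟨-, hc0⟩ | ⟨-, hc0⟩
    · exact absurd hm (not_of_filter_card_zero hc0 (zV_mem_L4 e))
    · exact hc0
  -- the edge {z_e, z} forces e to satisfy the defining predicate of N
  have keyA : ∀ e : {e // e ∈ F}, s(zE F e, zV F e) ∈ M →
      (∃ w ∈ L1 F ∪ L4 F, s(xE F e, w) ∈ M) ∧
      (∃ w ∈ L1 F ∪ L4 F, s(yE F e, w) ∈ M) ∧
      (∃ w ∈ L1 F ∪ L4 F, s(zE F e, w) ∈ M) := by
    intro e hm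
    have hc0 := keyOpt2 e hm
    have hx : ∃ w ∈ L1 F ∪ L4 F, s(xE F e, w) ∈ M := by
      obtain ⟨w, hw, hwm⟩ := exists_of_filter_card_one (h2 _ (pair_mem_L2 (e, false)))
      rcases nbr_xE e false w (hsub hwm) with rfl | rfl | rfl
      · exact ⟨xV F e, Finset.mem_union_left _ (xV_mem_L1 e), hwm⟩
      · exact ⟨yV F e, Finset.mem_union_left _ (yV_mem_L1 e), hwm⟩
      · rw [Sym2.eq_swap] at hwm
        exact absurd hwm (not_of_filter_card_zero hc0 (pair_mem_L2 (e, false)))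
    have hy : ∃ w ∈ L1 F ∪ L4 F, s(yE F e, w) ∈ M := by
      obtain ⟨w, hw, hwm⟩ := exists_of_filter_card_one (h2 _ (pair_mem_L2 (e, true)))
      rcases nbr_xE e true w (hsub hwm) with rfl | rfl | rfl
      · exact ⟨xV F e, Finset.mem_union_left _ (xV_mem_L1 e), hwm⟩
      · exact ⟨yV F e, Finset.mem_union_left _ (yV_mem_L1 e), hwm⟩
      · rw [Sym2.eq_swap] at hwm
        exact absurd hwm (not_of_filter_card_zero hc0 (pair_mem_L2 (e, true)))
    exact ⟨hx, hy, ⟨zV F e, Finset.mem_union_right _ (zV_mem_L4 e), hm⟩⟩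
  -- a gadget vertex (e,b) matched into L1 forces the edge {z_e, z}
  have keyC2 : ∀ (e : {e // e ∈ F}) (b : Bool) (v : RVtx F), v ∈ L1 F →
      s(Sum.inr (Sum.inl (e, b)), v) ∈ M → s(zE F e, zV F e) ∈ M := by
    intro e b v hv hm
    rcases h3 _ (zE_mem_L3 e) with ⟨hc2, -⟩ | ⟨hc1, -⟩
    · exfalso
      have hsubf : ((L2 F).filter fun w => s(zE F e, w) ∈ M) ⊆ {xE F e, yE F e} := by
        intro w hw
        obtain ⟨hw2, hwm⟩ := Finset.mem_filter.mp hw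
        rcases nbr_zE e w (hsub hwm) with rfl | rfl | rfl
        · simp
        · simp
        · exact absurd hw2 (zV_not_L2 e)
      have hfe : ((L2 F).filter fun w => s(zE F e, w) ∈ M) = {xE F e, yE F e} :=
        Finset.eq_of_subset_of_card_le hsubf
          (by rw [Finset.card_pair (xE_ne_yE e), hc2])
      have hzm : s(zE F e, Sum.inr (Sum.inl (e, b))) ∈ M := by
        have hmem : (Sum.inr (Sum.inl (e, b)) : RVtx F) ∈ ({xE F e, yE F e} : Finset _) := by
          cases b <;> simp [xE, yE]
        rw [← hfe] at hmem
        exact (Finset.mem_filter.mp hmem).2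
      rw [Sym2.eq_swap] at hzm
      have hvne : v ≠ zE F e := by
        rintro rfl
        simp [L1, zE] at hv
      exact hvne (uniq_of_filter_card_one (h2 _ (pair_mem_L2 (e, b)))
        (Finset.mem_union_left _ hv) hm
        (Finset.mem_union_right _ (zE_mem_L3 e)) hzm)
    · obtain ⟨w, hw4, hwm⟩ := exists_of_filter_card_one hc1
      rcases nbr_zE e w (hsub hwm) with rfl | rfl | rfl
      · exact absurd hw4 (by simp [L4, xE])
      · exact absurd hw4 (by simp [L4, yE])
      · exact hwm
  -- for e ∈ N, x = e.1.1 and y = e.1.2.1 are matched into e's gadget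
  have keyD : ∀ e : {e // e ∈ F},
      (∃ w ∈ L1 F ∪ L4 F, s(xE F e, w) ∈ M) → (∃ w ∈ L1 F ∪ L4 F, s(yE F e, w) ∈ M) →
      (∃ b, s(Sum.inl (Sum.inl e.1.1), Sum.inr (Sum.inl (e, b))) ∈ M) ∧
      (∃ b, s(Sum.inl (Sum.inr e.1.2.1), Sum.inr (Sum.inl (e, b))) ∈ M) := by
    rintro e ⟨w1, hw1, hm1⟩ ⟨w2, hw2, hm2⟩
    have d1 : w1 = xV F e ∨ w1 = yV F e := by
      rcases nbr_xE e false w1 (hsub hm1) with rfl | rfl | rfl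
      · exact Or.inl rfl
      · exact Or.inr rfl
      · exact absurd hw1 (zE_not_L14 e)
    have d2 : w2 = xV F e ∨ w2 = yV F e := by
      rcases nbr_xE e true w2 (hsub hm2) with rfl | rfl | rfl
      · exact Or.inl rfl
      · exact Or.inr rfl
      · exact absurd hw2 (zE_not_L14 e)
    rw [Sym2.eq_swap] at hm1 hm2
    rcases d1 with rfl | rfl <;> rcases d2 with rfl | rfl
    · exact absurd (uniq_of_filter_card_one (h1 _ (xV_mem_L1 e))
        (pair_mem_L2 (e, false)) hm1 (pair_mem_L2 (e, true)) hm2) (by simp)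
    · exact ⟨⟨false, hm1⟩, ⟨true, hm2⟩⟩
    · exact ⟨⟨true, hm2⟩, ⟨false, hm1⟩⟩
    · exact absurd (uniq_of_filter_card_one (h1 _ (yV_mem_L1 e))
        (pair_mem_L2 (e, false)) hm1 (pair_mem_L2 (e, true)) hm2) (by simp)
  refine ⟨?_, ?_, ?_, ?_, ?_⟩
  · -- subset
    intro a ha
    obtain ⟨e, -, rfl⟩ := Finset.mem_image.mp ha
    exact e.2
  · -- disjointness
    intro a ha b hb hne
    obtain ⟨ea, hea, rfl⟩ := Finset.mem_image.mp ha
    obtain ⟨eb, heb, rfl⟩ := Finset.mem_image.mp hb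
    have hne' : ea ≠ eb := fun h => hne (congrArg Subtype.val h)
    obtain ⟨hax, hay, haz⟩ := (Finset.mem_filter.mp hea).2
    obtain ⟨hbx, hby, hbz⟩ := (Finset.mem_filter.mp heb).2
    obtain ⟨⟨ba1, hba1⟩, ⟨ba2, hba2⟩⟩ := keyD ea hax hay
    obtain ⟨⟨bb1, hbb1⟩, ⟨bb2, hbb2⟩⟩ := keyD eb hbx hby
    refine ⟨?_, ?_, ?_⟩
    · intro h
      rw [← h] at hbb1
      have heq := uniq_of_filter_card_one (h1 _ (inl_mem_L1 (Sum.inl (ea : X × Y × Z).1)))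
        (pair_mem_L2 (ea, ba1)) hba1 (pair_mem_L2 (eb, bb1)) hbb1
      simp only [Sum.inr.injEq, Sum.inl.injEq, Prod.mk.injEq] at heq
      exact hne' heq.1
    · intro h
      rw [← h] at hbb2
      have heq := uniq_of_filter_card_one (h1 _ (inl_mem_L1 (Sum.inr (ea : X × Y × Z).2.1)))
        (pair_mem_L2 (ea, ba2)) hba2 (pair_mem_L2 (eb, bb2)) hbb2
      simp only [Sum.inr.injEq, Sum.inl.injEq, Prod.mk.injEq] at heq
      exact hne' heq.1
    · intro h
      have hza := keyZ ea haz
      have hzb := keyZ eb hbz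
      rw [Sym2.eq_swap] at hza hzb
      have hzv : zV F eb = zV F ea := by simp [zV, h]
      rw [hzv] at hzb
      have heq := uniq_of_filter_card_one (h4 _ (zV_mem_L4 ea))
        (zE_mem_L3 ea) hza (zE_mem_L3 eb) hzb
      simp only [zE, Sum.inr.injEq, Sum.inl.injEq] at heq
      exact hne' heq
  · -- covers X
    intro x
    obtain ⟨w, hwL2, hwm⟩ := exists_of_filter_card_one (h1 _ (inl_mem_L1 (Sum.inl x)))
    obtain ⟨e, hex, hw⟩ := nbr_x x w (hsub hwm)
    rw [Sym2.eq_swap] at hwm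
    have hz : s(zE F e, zV F e) ∈ M := by
      rcases hw with rfl | rfl
      · exact keyC2 e false _ (inl_mem_L1 (Sum.inl x)) hwm
      · exact keyC2 e true _ (inl_mem_L1 (Sum.inl x)) hwm
    exact ⟨e.1, Finset.mem_image.mpr ⟨e, Finset.mem_filter.mpr ⟨F.mem_attach e, keyA e hz⟩, rfl⟩, hex⟩
  · -- covers Y
    intro y
    obtain ⟨w, hwL2, hwm⟩ := exists_of_filter_card_one (h1 _ (inl_mem_L1 (Sum.inr y)))
    obtain ⟨e, hey, hw⟩ := nbr_y y w (hsub hwm)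
    rw [Sym2.eq_swap] at hwm
    have hz : s(zE F e, zV F e) ∈ M := by
      rcases hw with rfl | rfl
      · exact keyC2 e false _ (inl_mem_L1 (Sum.inr y)) hwm
      · exact keyC2 e true _ (inl_mem_L1 (Sum.inr y)) hwm
    exact ⟨e.1, Finset.mem_image.mpr ⟨e, Finset.mem_filter.mpr ⟨F.mem_attach e, keyA e hz⟩, rfl⟩, hey⟩
  · -- covers Z
    intro z
    obtain ⟨w, hwL3, hwm⟩ := exists_of_filter_card_one (h4 _ (z_mem_L4 z))
    obtain ⟨e, hez, rfl⟩ := nbr_z z w (hsub hwm)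
    rw [Sym2.eq_swap] at hwm
    have hz : s(zE F e, zV F e) ∈ M := by
      have hzv : zV F e = Sum.inr (Sum.inr (Sum.inr z)) := by simp [zV, hez]
      rw [hzv]
      exact hwm
    exact ⟨e.1, Finset.mem_image.mpr ⟨e, Finset.mem_filter.mpr ⟨F.mem_attach e, keyA e hz⟩, rfl⟩, hez⟩
end

section
/- Let H = (X ∪ Y ∪ Z, F) be a tripartite 3-uniform hypergraph with |X| = |Y| = |Z| = n and F ⊆ X × Y × Z, and let G_H be the 4-layer graph constructed from H by the reduction. If N ⊆ F is a perfect matching of H, then the edge set M consisting of the edges {x, x_e}, {y, y_e}, {z_e, z} for every hyperedge e = ⟨x, y, z⟩ ∈ N, together with the edges {x_e, z_e} and {y_e, z_e} for every hyperedge e ∈ F \ N, is an IV-matching of G_H. -/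
/-!
The reduction from 3-Dimensional Matching to the IV-matching problem
(Folwarczný–Knop).  The tripartite 3-uniform hypergraph `H` has pairwise
disjoint vertex classes `X`, `Y`, `Z` (modeled as separate types) and
hyperedge set `F ⊆ X × Y × Z`.  The reduction graph `G_H` has vertex type
`RVtx F` with four layers `L1 = X ∪ Y`, `L2 = {x_e, y_e : e ∈ F}`,
`L3 = {z_e : e ∈ F}`, `L4 = Z`, and edge set `GHedges F`.
-/

set_option maxHeartbeats 1000000
set_option synthInstance.maxSize 512

open Finset

variable {X Y Z : Type*} [DecidableEq X] [DecidableEq Y] [DecidableEq Z]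
  [Fintype X] [Fintype Y] [Fintype Z]

variable (F : Finset (X × Y × Z))

theorem perfect_matching_gives_iv_matching {X Y Z : Type*} [DecidableEq X] [DecidableEq Y] [DecidableEq Z]
    [Fintype X] [Fintype Y] [Fintype Z] (n : ℕ)
    (hX : Fintype.card X = n) (hY : Fintype.card Y = n) (hZ : Fintype.card Z = n)
    (F : Finset (X × Y × Z))
    (N : Finset (X × Y × Z)) (hN : HPerfectMatching F N) :
    IVMatching (L1 F) (L2 F) (L3 F) (L4 F) (GHedges F)
      ((F.attach.filter fun e => e.1 ∈ N).biUnion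
          (fun e => {s(xV F e, xE F e), s(yV F e, yE F e), s(zE F e, zV F e)}) ∪
       (F.attach.filter fun e => e.1 ∉ N).biUnion
          (fun e => {s(xE F e, zE F e), s(yE F e, zE F e)})) := by

  classical
  obtain ⟨hNF, hdisj, hx, hy, hz⟩ := hN
  have uniqX : ∀ e ∈ N, ∀ f ∈ N, e.1 = f.1 → e = f := by
    intro e he f hf h
    by_contra hne
    exact (hdisj e he f hf hne).1 h
  have uniqY : ∀ e ∈ N, ∀ f ∈ N, e.2.1 = f.2.1 → e = f := by
    intro e he f hf h
    by_contra hne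
    exact (hdisj e he f hf hne).2.1 h
  have uniqZ : ∀ e ∈ N, ∀ f ∈ N, e.2.2 = f.2.2 → e = f := by
    intro e he f hf h
    by_contra hne
    exact (hdisj e he f hf hne).2.2 h
  set M : Finset (Sym2 (RVtx F)) :=
      ((F.attach.filter fun e => e.1 ∈ N).biUnion
          (fun e => {s(xV F e, xE F e), s(yV F e, yE F e), s(zE F e, zV F e)}) ∪
       (F.attach.filter fun e => e.1 ∉ N).biUnion
          (fun e => {s(xE F e, zE F e), s(yE F e, zE F e)})) with hM
  have memM : ∀ s : Sym2 (RVtx F), s ∈ M ↔ ∃ e : {e // e ∈ F},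
      (e.1 ∈ N ∧ (s = s(xV F e, xE F e) ∨ s = s(yV F e, yE F e) ∨ s = s(zE F e, zV F e))) ∨
      (e.1 ∉ N ∧ (s = s(xE F e, zE F e) ∨ s = s(yE F e, zE F e))) := by
    intro s
    simp only [hM, Finset.mem_union, Finset.mem_biUnion, Finset.mem_filter,
      Finset.mem_attach, true_and, Finset.mem_insert, Finset.mem_singleton]
    constructor
    · rintro (⟨e, he, h⟩ | ⟨e, he, h⟩)
      · exact ⟨e, Or.inl ⟨he, h⟩⟩
      · exact ⟨e, Or.inr ⟨he, h⟩⟩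
    · rintro ⟨e, (⟨he, h⟩ | ⟨he, h⟩)⟩
      · exact Or.inl ⟨e, he, h⟩
      · exact Or.inr ⟨e, he, h⟩
  refine ⟨?_, ?_, ?_, ?_, ?_⟩
  · -- M ⊆ E
    intro s hs
    rw [memM] at hs
    obtain ⟨e, h⟩ := hs
    simp only [GHedges, Finset.mem_biUnion, Finset.mem_univ, true_and,
      Finset.mem_insert, Finset.mem_singleton]
    exact ⟨e, by tauto⟩
  · -- V1
    intro v hv
    simp only [L1, Finset.mem_image, Finset.mem_univ, true_and] at hv
    obtain ⟨a, rfl⟩ := hv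
    rcases a with x | y
    · obtain ⟨e0, he0N, rfl⟩ := hx x
      have he0F := hNF he0N
      have hset : (L2 F).filter (fun w => s(Sum.inl (Sum.inl e0.1), w) ∈ M) = {xE F ⟨e0, he0F⟩} := by
        ext w
        simp only [Finset.mem_filter, L2, Finset.mem_image, Finset.mem_univ, true_and,
          Finset.mem_singleton, memM]
        constructor
        · rintro ⟨⟨⟨f, b⟩, rfl⟩, g, hg⟩
          simp only [xV, yV, zV, xE, yE, zE, Sym2.eq_iff, Sum.inl.injEq, Sum.inr.injEq,
            Prod.mk.injEq, and_false, false_and, and_true, true_and, or_false, false_or,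
            reduceCtorEq] at hg
          obtain ⟨hgN, hxx, rfl, rfl⟩ := hg
          have h1 : e0 = ↑f := uniqX e0 he0N _ hgN hxx
          simp only [xE, Sum.inr.injEq, Sum.inl.injEq, Prod.mk.injEq]
          exact ⟨Subtype.ext h1.symm, trivial⟩
        · rintro rfl
          exact ⟨⟨(⟨e0, he0F⟩, false), rfl⟩, ⟨e0, he0F⟩, Or.inl ⟨he0N, Or.inl rfl⟩⟩
      rw [hset, Finset.card_singleton]
    · obtain ⟨e0, he0N, rfl⟩ := hy y
      have he0F := hNF he0N
      have hset : (L2 F).filter (fun w => s(Sum.inl (Sum.inr e0.2.1), w) ∈ M) = {yE F ⟨e0, he0F⟩} := by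
        ext w
        simp only [Finset.mem_filter, L2, Finset.mem_image, Finset.mem_univ, true_and,
          Finset.mem_singleton, memM]
        constructor
        · rintro ⟨⟨⟨f, b⟩, rfl⟩, g, hg⟩
          simp only [xV, yV, zV, xE, yE, zE, Sym2.eq_iff, Sum.inl.injEq, Sum.inr.injEq,
            Prod.mk.injEq, and_false, false_and, and_true, true_and, or_false, false_or,
            reduceCtorEq] at hg
          obtain ⟨hgN, hyy, rfl, rfl⟩ := hg
          have h1 : e0 = ↑f := uniqY e0 he0N _ hgN hyy
          simp only [yE, Sum.inr.injEq, Sum.inl.injEq, Prod.mk.injEq]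
          exact ⟨Subtype.ext h1.symm, trivial⟩
        · rintro rfl
          exact ⟨⟨(⟨e0, he0F⟩, true), rfl⟩, ⟨e0, he0F⟩, Or.inl ⟨he0N, Or.inr (Or.inl rfl)⟩⟩
      rw [hset, Finset.card_singleton]
  · -- V2
    intro v hv
    simp only [L2, Finset.mem_image, Finset.mem_univ, true_and] at hv
    obtain ⟨⟨e, b⟩, rfl⟩ := hv
    by_cases heN : e.1 ∈ N
    · rcases b with _ | _
      · -- x_e, matched to x in V1
        have hset : ((L1 F) ∪ (L3 F)).filter (fun w => s(Sum.inr (Sum.inl (e, false)), w) ∈ M)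
            = {xV F e} := by
          ext w
          simp only [Finset.mem_filter, Finset.mem_union, L1, L3, Finset.mem_image,
            Finset.mem_univ, true_and, Finset.mem_singleton, memM]
          constructor
          · rintro ⟨hw, g, hg⟩
            simp only [xV, yV, zV, xE, yE, zE, Sym2.eq_iff, Sum.inl.injEq, Sum.inr.injEq,
            Prod.mk.injEq, and_false, false_and, and_true, true_and, or_false, false_or,
            reduceCtorEq] at hg
            rcases hw with ⟨a, rfl⟩ | ⟨g', rfl⟩
            · rcases hg with ⟨hgN, rfl, ha⟩ | ⟨hgN, rfl, ha⟩
              · exact ha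
              · exact absurd ha (by simp)
            · rcases hg with ⟨hgN, rfl, ha⟩ | ⟨hgN, rfl, ha⟩
              · exact absurd ha (by simp)
              · exact absurd heN hgN
          · rintro rfl
            exact ⟨Or.inl ⟨Sum.inl e.1.1, rfl⟩, e, Or.inl ⟨heN, Or.inl (Sym2.eq_swap)⟩⟩
        rw [hset, Finset.card_singleton]
      · -- y_e, matched to y in V1
        have hset : ((L1 F) ∪ (L3 F)).filter (fun w => s(Sum.inr (Sum.inl (e, true)), w) ∈ M)
            = {yV F e} := by
          ext w
          simp only [Finset.mem_filter, Finset.mem_union, L1, L3, Finset.mem_image,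
            Finset.mem_univ, true_and, Finset.mem_singleton, memM]
          constructor
          · rintro ⟨hw, g, hg⟩
            simp only [xV, yV, zV, xE, yE, zE, Sym2.eq_iff, Sum.inl.injEq, Sum.inr.injEq,
            Prod.mk.injEq, and_false, false_and, and_true, true_and, or_false, false_or,
            reduceCtorEq] at hg
            rcases hw with ⟨a, rfl⟩ | ⟨g', rfl⟩
            · rcases hg with ⟨hgN, rfl, ha⟩ | ⟨hgN, rfl, ha⟩
              · exact ha
              · exact absurd ha (by simp)
            · rcases hg with ⟨hgN, rfl, ha⟩ | ⟨hgN, rfl, ha⟩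
              · exact absurd ha (by simp)
              · exact absurd heN hgN
          · rintro rfl
            exact ⟨Or.inl ⟨Sum.inr e.1.2.1, rfl⟩, e, Or.inl ⟨heN, Or.inr (Or.inl Sym2.eq_swap)⟩⟩
        rw [hset, Finset.card_singleton]
    · -- matched to z_e in V3
      have hset : ((L1 F) ∪ (L3 F)).filter (fun w => s(Sum.inr (Sum.inl (e, b)), w) ∈ M)
          = {zE F e} := by
        ext w
        simp only [Finset.mem_filter, Finset.mem_union, L1, L3, Finset.mem_image,
          Finset.mem_univ, true_and, Finset.mem_singleton, memM]
        constructor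
        · rintro ⟨hw, g, hg⟩
          simp only [xV, yV, zV, xE, yE, zE, Sym2.eq_iff, Sum.inl.injEq, Sum.inr.injEq,
            Prod.mk.injEq, and_false, false_and, and_true, true_and, or_false, false_or,
            reduceCtorEq] at hg
          rcases hw with ⟨a, rfl⟩ | ⟨g', rfl⟩
          · rcases hg with ⟨hgN, ⟨⟨rfl, hb⟩, ha⟩ | ⟨⟨rfl, hb⟩, ha⟩⟩ | ⟨hgN, ⟨⟨rfl, hb⟩, ha⟩ | ⟨⟨rfl, hb⟩, ha⟩⟩
            · exact absurd hgN heN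
            · exact absurd hgN heN
            · exact absurd ha (by simp)
            · exact absurd ha (by simp)
          · rcases hg with ⟨hgN, ⟨⟨rfl, hb⟩, ha⟩ | ⟨⟨rfl, hb⟩, ha⟩⟩ | ⟨hgN, ⟨⟨rfl, hb⟩, ha⟩ | ⟨⟨rfl, hb⟩, ha⟩⟩
            · exact absurd ha (by simp)
            · exact absurd ha (by simp)
            · exact ha
            · exact ha
        · rintro rfl
          rcases b with _ | _
          · exact ⟨Or.inr ⟨e, rfl⟩, e, Or.inr ⟨heN, Or.inl rfl⟩⟩
          · exact ⟨Or.inr ⟨e, rfl⟩, e, Or.inr ⟨heN, Or.inr rfl⟩⟩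
      rw [hset, Finset.card_singleton]
  · -- V3
    intro v hv
    simp only [L3, Finset.mem_image, Finset.mem_univ, true_and] at hv
    obtain ⟨e, rfl⟩ := hv
    by_cases heN : e.1 ∈ N
    · right
      constructor
      · have hset : (L4 F).filter (fun w => s(Sum.inr (Sum.inr (Sum.inl e)), w) ∈ M)
            = {zV F e} := by
          ext w
          simp only [Finset.mem_filter, L4, Finset.mem_image, Finset.mem_univ, true_and,
            Finset.mem_singleton, memM]
          constructor
          · rintro ⟨⟨z0, rfl⟩, g, hg⟩
            simp only [xV, yV, zV, xE, yE, zE, Sym2.eq_iff, Sum.inl.injEq, Sum.inr.injEq,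
            Prod.mk.injEq, and_false, false_and, and_true, true_and, or_false, false_or,
            reduceCtorEq] at hg
            obtain ⟨hgN, rfl, rfl⟩ := hg
            rfl
          · rintro rfl
            exact ⟨⟨e.1.2.2, rfl⟩, e, Or.inl ⟨heN, Or.inr (Or.inr rfl)⟩⟩
        rw [hset, Finset.card_singleton]
      · rw [Finset.card_eq_zero, Finset.filter_eq_empty_iff]
        intro w hw
        simp only [L2, Finset.mem_image, Finset.mem_univ, true_and] at hw
        obtain ⟨⟨f, b⟩, rfl⟩ := hw
        rw [memM]
        rintro ⟨g, hg⟩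
        simp only [xV, yV, zV, xE, yE, zE, Sym2.eq_iff, Sum.inl.injEq, Sum.inr.injEq,
            Prod.mk.injEq, and_false, false_and, and_true, true_and, or_false, false_or,
            reduceCtorEq] at hg
        rcases hg with ⟨hgN, ⟨rfl, _, _⟩ | ⟨rfl, _, _⟩⟩ <;> exact hgN heN
    · left
      constructor
      · have hset : (L2 F).filter (fun w => s(Sum.inr (Sum.inr (Sum.inl e)), w) ∈ M)
            = {xE F e, yE F e} := by
          ext w
          simp only [Finset.mem_filter, L2, Finset.mem_image, Finset.mem_univ, true_and,
            Finset.mem_insert, Finset.mem_singleton, memM]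
          constructor
          · rintro ⟨⟨⟨f, b⟩, rfl⟩, g, hg⟩
            simp only [xV, yV, zV, xE, yE, zE, Sym2.eq_iff, Sum.inl.injEq, Sum.inr.injEq,
            Prod.mk.injEq, and_false, false_and, and_true, true_and, or_false, false_or,
            reduceCtorEq] at hg
            rcases hg with ⟨hgN, ⟨rfl, rfl, rfl⟩ | ⟨rfl, rfl, rfl⟩⟩
            · exact Or.inl rfl
            · exact Or.inr rfl
          · rintro (rfl | rfl)
            · exact ⟨⟨(e, false), rfl⟩, e, Or.inr ⟨heN, Or.inl Sym2.eq_swap⟩⟩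
            · exact ⟨⟨(e, true), rfl⟩, e, Or.inr ⟨heN, Or.inr Sym2.eq_swap⟩⟩
        rw [hset]
        rw [Finset.card_insert_of_notMem (by simp [xE, yE]), Finset.card_singleton]
      · rw [Finset.card_eq_zero, Finset.filter_eq_empty_iff]
        intro w hw
        simp only [L4, Finset.mem_image, Finset.mem_univ, true_and] at hw
        obtain ⟨z0, rfl⟩ := hw
        rw [memM]
        rintro ⟨g, hg⟩
        simp only [xV, yV, zV, xE, yE, zE, Sym2.eq_iff, Sum.inl.injEq, Sum.inr.injEq,
            Prod.mk.injEq, and_false, false_and, and_true, true_and, or_false, false_or,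
            reduceCtorEq] at hg
        obtain ⟨hgN, rfl, -⟩ := hg
        exact heN hgN
  · -- V4
    intro v hv
    simp only [L4, Finset.mem_image, Finset.mem_univ, true_and] at hv
    obtain ⟨z, rfl⟩ := hv
    obtain ⟨e0, he0N, rfl⟩ := hz z
    have he0F := hNF he0N
    have hset : (L3 F).filter (fun w => s(Sum.inr (Sum.inr (Sum.inr e0.2.2)), w) ∈ M)
        = {zE F ⟨e0, he0F⟩} := by
      ext w
      simp only [Finset.mem_filter, L3, Finset.mem_image, Finset.mem_univ, true_and,
        Finset.mem_singleton, memM]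
      constructor
      · rintro ⟨⟨f, rfl⟩, g, hg⟩
        simp only [xV, yV, zV, xE, yE, zE, Sym2.eq_iff, Sum.inl.injEq, Sum.inr.injEq,
            Prod.mk.injEq, and_false, false_and, and_true, true_and, or_false, false_or,
            reduceCtorEq] at hg
        obtain ⟨hgN, hzz, rfl⟩ := hg
        have h1 : e0 = ↑f := uniqZ e0 he0N _ hgN hzz
        simp only [zE, Sum.inr.injEq, Sum.inl.injEq]
        exact Subtype.ext h1.symm
      · rintro rfl
        exact ⟨⟨⟨e0, he0F⟩, rfl⟩, ⟨e0, he0F⟩, Or.inl ⟨he0N, Or.inr (Or.inr Sym2.eq_swap)⟩⟩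
    rw [hset, Finset.card_singleton]
end

section
/- Let H = (X ∪ Y ∪ Z, F) be a tripartite 3-uniform hypergraph and let G_H be the 4-layer graph constructed from H by the reduction. If M is an IV-matching of G_H, then for every hyperedge e = ⟨x, y, z⟩ ∈ F exactly one of the following holds: (i) each of x_e, y_e is matched in M to a vertex of V₁ and z_e is matched in M to a vertex of V₄ (all three covered by I-shapes), or (ii) M contains both edges {x_e, z_e} and {y_e, z_e} and none of x_e, y_e, z_e is incident in M to a vertex of V₁ ∪ V₄ (all three covered by a single V-shape). -/
/-!
The reduction from 3-Dimensional Matching to the IV-matching problem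
(Folwarczný–Knop).  The tripartite 3-uniform hypergraph `H` has pairwise
disjoint vertex classes `X`, `Y`, `Z` (modeled as separate types) and
hyperedge set `F ⊆ X × Y × Z`.  The reduction graph `G_H` has vertex type
`RVtx F` with four layers `L1 = X ∪ Y`, `L2 = {x_e, y_e : e ∈ F}`,
`L3 = {z_e : e ∈ F}`, `L4 = Z`, and edge set `GHedges F`.
-/

set_option maxHeartbeats 1000000
set_option synthInstance.maxSize 512

open Finset

variable {X Y Z : Type*} [DecidableEq X] [DecidableEq Y] [DecidableEq Z]
  [Fintype X] [Fintype Y] [Fintype Z]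

variable (F : Finset (X × Y × Z))

lemma edge_xE (e : {e // e ∈ F}) (w : RVtx F)
    (h : s(xE F e, w) ∈ GHedges F) : w = xV F e ∨ w = yV F e ∨ w = zE F e := by
  simp only [GHedges, mem_biUnion, mem_univ, true_and] at h
  obtain ⟨e', h⟩ := h
  simp only [mem_insert, mem_singleton, Sym2.eq_iff, xE, yE, zE, xV, yV, zV] at h ⊢
  aesop

lemma edge_yE (e : {e // e ∈ F}) (w : RVtx F)
    (h : s(yE F e, w) ∈ GHedges F) : w = xV F e ∨ w = yV F e ∨ w = zE F e := by
  simp only [GHedges, mem_biUnion, mem_univ, true_and] at h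
  obtain ⟨e', h⟩ := h
  simp only [mem_insert, mem_singleton, Sym2.eq_iff, xE, yE, zE, xV, yV, zV] at h ⊢
  aesop

lemma edge_zE (e : {e // e ∈ F}) (w : RVtx F)
    (h : s(zE F e, w) ∈ GHedges F) : w = xE F e ∨ w = yE F e ∨ w = zV F e := by
  simp only [GHedges, mem_biUnion, mem_univ, true_and] at h
  obtain ⟨e', h⟩ := h
  simp only [mem_insert, mem_singleton, Sym2.eq_iff, xE, yE, zE, xV, yV, zV] at h ⊢
  aesop

theorem iv_matching_hyperedge_dichotomy {X Y Z : Type*} [DecidableEq X] [DecidableEq Y] [DecidableEq Z]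
    [Fintype X] [Fintype Y] [Fintype Z]
    (F : Finset (X × Y × Z))
    (M : Finset (Sym2 (RVtx F)))
    (hM : IVMatching (L1 F) (L2 F) (L3 F) (L4 F) (GHedges F) M) :
    ∀ e : {e // e ∈ F},
      Xor'
        ((∃ w ∈ L1 F, s(xE F e, w) ∈ M) ∧ (∃ w ∈ L1 F, s(yE F e, w) ∈ M) ∧
          (∃ w ∈ L4 F, s(zE F e, w) ∈ M))
        (s(xE F e, zE F e) ∈ M ∧ s(yE F e, zE F e) ∈ M ∧
          ∀ w ∈ L1 F ∪ L4 F,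
            s(xE F e, w) ∉ M ∧ s(yE F e, w) ∉ M ∧ s(zE F e, w) ∉ M) := by
  obtain ⟨hsub, h1, h2, h3, h4⟩ := hM
  intro e
  have hxE2 : xE F e ∈ L2 F := by simp [L2, xE]
  have hyE2 : yE F e ∈ L2 F := by simp [L2, yE]
  have hzE3 : zE F e ∈ L3 F := by simp [L3, zE]
  have hzE13 : zE F e ∈ L1 F ∪ L3 F := mem_union_right _ hzE3
  have hzEnot1 : zE F e ∉ L1 F := by simp [L1, zE]
  have hx := h2 _ hxE2
  have hy := h2 _ hyE2
  have hz := h3 _ hzE3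
  rw [card_eq_one] at hx hy
  obtain ⟨wx, hwx⟩ := hx
  obtain ⟨wy, hwy⟩ := hy
  have hwxm := mem_filter.mp (hwx ▸ mem_singleton_self wx)
  have hwym := mem_filter.mp (hwy ▸ mem_singleton_self wy)
  -- key swap facts
  have swapx : ∀ w, s(zE F e, w) = s(w, zE F e) := fun w => Sym2.eq_swap
  rcases hz with ⟨hz2, hz0⟩ | ⟨hz1, hz0⟩
  · -- V-shape case
    have hfsub : (L2 F).filter (fun w => s(zE F e, w) ∈ M) ⊆ {xE F e, yE F e} := by
      intro w hw
      obtain ⟨hw2, hwM⟩ := mem_filter.mp hw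
      rcases edge_zE F e w (hsub hwM) with h | h | h
      · simp [h]
      · simp [h]
      · exfalso; subst h; simp [L2, zV] at hw2
    have hfeq : (L2 F).filter (fun w => s(zE F e, w) ∈ M) = {xE F e, yE F e} := by
      apply eq_of_subset_of_card_le hfsub
      rw [hz2]
      exact (card_insert_le _ _).trans (by simp)
    have hxz : s(xE F e, zE F e) ∈ M := by
      have : xE F e ∈ (L2 F).filter (fun w => s(zE F e, w) ∈ M) := by
        rw [hfeq]; simp
      rw [← swapx]; exact (mem_filter.mp this).2
    have hyz : s(yE F e, zE F e) ∈ M := by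
      have : yE F e ∈ (L2 F).filter (fun w => s(zE F e, w) ∈ M) := by
        rw [hfeq]; simp
      rw [← swapx]; exact (mem_filter.mp this).2
    have hwxz : wx = zE F e := by
      have : zE F e ∈ (L1 F ∪ L3 F).filter (fun w => s(xE F e, w) ∈ M) :=
        mem_filter.mpr ⟨hzE13, hxz⟩
      rw [hwx, mem_singleton] at this; exact this.symm
    have hwyz : wy = zE F e := by
      have : zE F e ∈ (L1 F ∪ L3 F).filter (fun w => s(yE F e, w) ∈ M) :=
        mem_filter.mpr ⟨hzE13, hyz⟩
      rw [hwy, mem_singleton] at this; exact this.symm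
    refine Or.inr ⟨⟨hxz, hyz, ?_⟩, ?_⟩
    · intro w hw
      rcases mem_union.mp hw with hw1 | hw4
      · refine ⟨?_, ?_, ?_⟩
        · intro hc
          have : w ∈ (L1 F ∪ L3 F).filter (fun w => s(xE F e, w) ∈ M) :=
            mem_filter.mpr ⟨mem_union_left _ hw1, hc⟩
          rw [hwx, mem_singleton, hwxz] at this
          exact hzEnot1 (this ▸ hw1)
        · intro hc
          have : w ∈ (L1 F ∪ L3 F).filter (fun w => s(yE F e, w) ∈ M) :=
            mem_filter.mpr ⟨mem_union_left _ hw1, hc⟩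
          rw [hwy, mem_singleton, hwyz] at this
          exact hzEnot1 (this ▸ hw1)
        · intro hc
          rcases edge_zE F e w (hsub hc) with h | h | h <;>
            subst h <;> simp [L1, xE, yE, zV] at hw1
      · refine ⟨?_, ?_, ?_⟩
        · intro hc
          rcases edge_xE F e w (hsub hc) with h | h | h <;>
            subst h <;> simp [L4, xV, yV, zE] at hw4
        · intro hc
          rcases edge_yE F e w (hsub hc) with h | h | h <;>
            subst h <;> simp [L4, xV, yV, zE] at hw4
        · intro hc
          have : w ∈ (L4 F).filter (fun w => s(zE F e, w) ∈ M) :=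
            mem_filter.mpr ⟨hw4, hc⟩
          rw [card_eq_zero] at hz0
          exact absurd this (hz0 ▸ notMem_empty w)
    · rintro ⟨-, -, wz, hwz4, hwzM⟩
      have : wz ∈ (L4 F).filter (fun w => s(zE F e, w) ∈ M) :=
        mem_filter.mpr ⟨hwz4, hwzM⟩
      rw [card_eq_zero] at hz0
      exact absurd this (hz0 ▸ notMem_empty wz)
  · -- I-shape case
    rw [card_eq_zero] at hz0
    have hnoV : ∀ v, v ∈ L2 F → s(zE F e, v) ∈ M → False := by
      intro v hv2 hvM
      have : v ∈ (L2 F).filter (fun w => s(zE F e, w) ∈ M) := mem_filter.mpr ⟨hv2, hvM⟩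
      exact absurd this (hz0 ▸ notMem_empty v)
    have hwx1 : wx ∈ L1 F := by
      rcases edge_xE F e wx (hsub hwxm.2) with h | h | h
      · subst h; simp [L1, xV]
      · subst h; simp [L1, yV]
      · exfalso; subst h
        exact hnoV _ hxE2 (by rw [swapx]; exact hwxm.2)
    have hwy1 : wy ∈ L1 F := by
      rcases edge_yE F e wy (hsub hwym.2) with h | h | h
      · subst h; simp [L1, xV]
      · subst h; simp [L1, yV]
      · exfalso; subst h
        exact hnoV _ hyE2 (by rw [swapx]; exact hwym.2)
    have hz4 : ∃ w ∈ L4 F, s(zE F e, w) ∈ M := by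
      rw [card_eq_one] at hz1
      obtain ⟨wz, hwz⟩ := hz1
      have := mem_filter.mp (hwz ▸ mem_singleton_self wz)
      exact ⟨wz, this.1, this.2⟩
    refine Or.inl ⟨⟨⟨wx, hwx1, hwxm.2⟩, ⟨wy, hwy1, hwym.2⟩, hz4⟩, ?_⟩
    rintro ⟨hxz, -, -⟩
    exact hnoV _ hxE2 (by rw [swapx]; exact hxz)
end
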